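/- arXiv:1902.01076 — 2 statements merged into one kernel-verified Lean document; each statement's English description precedes it below -/
import Mathlib

section
/- For natural numbers m < n with m ≥ 1, there exists a constant C > 0 (independent of m and n) such that |∏_{i=m}^{n} (2i/(2i+1)) · √(n/m) - 1| ≤ C/m. In particular, ∏_{i=m}^{n}(2i/(2i+1)) = √(m/n) · (1 + O(1/m)). -/
open Finset

lemma tele1 (m : ℕ) : ∀ n, m ≤ n → ∏ i ∈ Finset.Icc m n, ((i : ℝ) / (i + 1)) = m / (n + 1) := by
  intro n
  induction n with
  | zero => intro h; interval_cases m; simp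
  | succ k ih =>
    intro h
    rcases Nat.lt_or_ge m (k+1) with h' | h'
    · rw [Finset.prod_Icc_succ_top (by omega), ih (by omega)]
      have hk : ((k:ℝ)+1) ≠ 0 := by positivity
      push_cast
      field_simp
    · have : m = k + 1 := le_antisymm h h'
      subst this
      simp

lemma tele2 (m : ℕ) (hm : 1 ≤ m) : ∀ n, m ≤ n →
    ∏ i ∈ Finset.Icc m n, ((2 * (i : ℝ) - 1) / (2 * i + 1)) = (2 * m - 1) / (2 * n + 1) := by
  intro n
  induction n with
  | zero => intro h; omega
  | succ k ih =>
    intro h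
    rcases Nat.lt_or_ge m (k+1) with h' | h'
    · rw [Finset.prod_Icc_succ_top (by omega), ih (by omega)]
      have hk : (2*(k:ℝ)+1) ≠ 0 := by positivity
      push_cast
      field_simp
      ring
    · have : m = k + 1 := le_antisymm h h'
      subst this
      simp

theorem stmt4 : ∃ C : ℝ, 0 < C ∧ ∀ m n : ℕ, 1 ≤ m → m < n →
    |(∏ i ∈ Finset.Icc m n, ((2 * i : ℝ) / (2 * i + 1))) * Real.sqrt ((n : ℝ) / m) - 1|
      ≤ C / m := by
  refine ⟨1, one_pos, ?_⟩
  intro m n hm hmn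
  have hm1 : (1:ℝ) ≤ m := by exact_mod_cast hm
  have hmpos : (0:ℝ) < m := by linarith
  have hn1 : (m:ℝ) + 1 ≤ n := by exact_mod_cast hmn
  have hnpos : (0:ℝ) < n := by linarith
  set P : ℝ := ∏ i ∈ Finset.Icc m n, ((2 * i : ℝ) / (2 * i + 1)) with hP
  have hPpos : 0 ≤ P := by
    apply Finset.prod_nonneg
    intro i _
    positivity
  -- upper bound on P^2
  have hsq : P ^ 2 = ∏ i ∈ Finset.Icc m n, ((2 * (i:ℝ)) / (2 * i + 1)) ^ 2 := by
    rw [hP, ← Finset.prod_pow]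
  have hub : P ^ 2 ≤ (m : ℝ) / (n + 1) := by
    rw [hsq, ← tele1 m n (le_of_lt hmn)]
    apply Finset.prod_le_prod
    · intro i _; positivity
    · intro i hi
      have hi1 : 1 ≤ i := le_trans hm (Finset.mem_Icc.mp hi).1
      have hi1' : (1:ℝ) ≤ i := by exact_mod_cast hi1
      rw [div_pow, div_le_div_iff₀ (by positivity) (by positivity)]
      nlinarith [sq_nonneg ((i:ℝ))]
  have hlb : (2 * (m:ℝ) - 1) / (2 * n + 1) ≤ P ^ 2 := by
    rw [hsq, ← tele2 m hm n (le_of_lt hmn)]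
    apply Finset.prod_le_prod
    · intro i hi
      have hi1 : 1 ≤ i := le_trans hm (Finset.mem_Icc.mp hi).1
      have hi1' : (1:ℝ) ≤ i := by exact_mod_cast hi1
      apply div_nonneg (by nlinarith) (by positivity)
    · intro i hi
      have hi1 : 1 ≤ i := le_trans hm (Finset.mem_Icc.mp hi).1
      have hi1' : (1:ℝ) ≤ i := by exact_mod_cast hi1
      rw [div_pow, div_le_div_iff₀ (by positivity) (by positivity)]
      nlinarith
  -- rewrite X as sqrt
  have hX : P * Real.sqrt ((n:ℝ)/m) = Real.sqrt (P ^ 2 * ((n:ℝ)/m)) := by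
    rw [Real.sqrt_mul (by positivity), Real.sqrt_sq hPpos]
  have hupper : P * Real.sqrt ((n:ℝ)/m) ≤ 1 := by
    rw [hX]
    rw [show (1:ℝ) = Real.sqrt 1 by simp]
    apply Real.sqrt_le_sqrt
    have : P ^ 2 * ((n:ℝ)/m) ≤ ((m:ℝ)/(n+1)) * ((n:ℝ)/m) := by
      apply mul_le_mul_of_nonneg_right hub (by positivity)
    apply le_trans this
    rw [div_mul_div_comm, div_le_one (by positivity)]
    nlinarith
  have hlower : 1 - 1 / (m:ℝ) ≤ P * Real.sqrt ((n:ℝ)/m) := by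
    rw [hX]
    have h1 : 1 - 1/(m:ℝ) ≤ ((2*(m:ℝ)-1)/(2*n+1)) * ((n:ℝ)/m) := by
      rw [div_mul_div_comm, show 1 - 1/(m:ℝ) = ((m:ℝ)-1)/m by field_simp,
        div_le_div_iff₀ (by positivity) (by positivity)]
      nlinarith
    have h2 : ((2*(m:ℝ)-1)/(2*n+1)) * ((n:ℝ)/m) ≤ P ^ 2 * ((n:ℝ)/m) :=
      mul_le_mul_of_nonneg_right hlb (by positivity)
    have h3 : Real.sqrt (1 - 1/(m:ℝ)) ≤ Real.sqrt (P ^ 2 * ((n:ℝ)/m)) :=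
      Real.sqrt_le_sqrt (le_trans h1 h2)
    refine le_trans ?_ h3
    have ht0 : (0:ℝ) ≤ 1 - 1/(m:ℝ) := by
      rw [sub_nonneg, div_le_one hmpos]; exact hm1
    have ht1 : 1 - 1/(m:ℝ) ≤ 1 := by
      have : (0:ℝ) < 1/(m:ℝ) := by positivity
      linarith
    nlinarith [Real.sq_sqrt ht0, Real.sqrt_nonneg (1 - 1/(m:ℝ)),
      Real.sqrt_le_one.mpr ht1]
  rw [abs_le]
  constructor
  · linarith
  · have : (0:ℝ) < 1/(m:ℝ) := by positivity
    linarith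
end

section
/- Let λ = λ₀[1 - e_p(αM(N_cap - λ/μ)^{-1/2} + βp_f)] define λ implicitly as a function of p_f (with N_cap fixed and all parameters positive, on the domain where λ ∈ (0, μN_cap)). Suppose (λ, p_f) and (λ', p_f') both satisfy this demand equation together with the first-order condition λ₀e_pβμ p_f = λ₀e_pαM·λ/(2(N_cap - λ/μ)^{3/2}) + λμ. If p_f' > p_f then the demand equation forces λ' < λ while the first-order condition forces λ' > λ; hence p_f' = p_f and the solution is unique. -/
/-!
Along the demand curve a higher price `p_f` means a lower arrival rate `λ`: the congestion term
`(N_cap - λ/μ)^{-1/2}` grows with `λ`, so it cannot compensate a price increase. Along the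
first-order condition a higher price means a higher `λ`, because its right-hand side is strictly
increasing in `λ`. Two solutions with different prices would have to satisfy both, so the prices
agree, and then strict monotonicity of the first-order condition identifies the rates.
-/

open Set Function

section Abstract

variable {α β γ : Type*} [LinearOrder α] [Preorder β] [Preorder γ]

theorem lt_of_isFixedPt_of_lt {D : α → β → α} {s : Set α}
    (hDx : ∀ p, AntitoneOn (D · p) s) (hDp : ∀ x, StrictAnti (D x))
    {x y : α} {p q : β} (hx : x ∈ s) (hy : y ∈ s)
    (hxp : IsFixedPt (D · p) x) (hyq : IsFixedPt (D · q) y) (hpq : p < q) : y < x := by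
  by_contra! hxy
  have hyx : y < x :=
    calc y = D y q := hyq.symm
      _ ≤ D x q := hDx q hx hy hxy
      _ < D x p := hDp x hpq
      _ = x := hxp
  exact hyx.not_ge hxy

theorem lt_of_eq_of_strictMono {F : α → γ} {G : β → γ} {s : Set α}
    (hF : StrictMonoOn F s) (hG : StrictMono G)
    {x y : α} {p q : β} (hx : x ∈ s) (hy : y ∈ s)
    (hxp : G p = F x) (hyq : G q = F y) (hpq : p < q) : x < y :=
  (hF.lt_iff_lt hx hy).1 (hxp ▸ hyq ▸ hG hpq)

end Abstract

noncomputable section Model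

variable (lam0 e_p alpha M beta mu Ncap : ℝ)

def demand (x p : ℝ) : ℝ :=
  lam0 * (1 - e_p * (alpha * M * (Ncap - x / mu) ^ (-(1 : ℝ) / 2) + beta * p))

def focRHS (x : ℝ) : ℝ :=
  lam0 * e_p * alpha * M * x / (2 * (Ncap - x / mu) ^ ((3 : ℝ) / 2)) + x * mu

variable {lam0 e_p alpha M beta mu Ncap}

theorem sub_div_pos_of_lt_mul (hmu : 0 < mu) {x : ℝ} (hx : x < mu * Ncap) :
    0 < Ncap - x / mu :=
  sub_pos.2 ((div_lt_iff₀' hmu).2 hx)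

theorem antitoneOn_demand (hlam0 : 0 ≤ lam0) (hep : 0 ≤ e_p) (halphaM : 0 ≤ alpha * M)
    (hmu : 0 < mu) (p : ℝ) :
    AntitoneOn (demand lam0 e_p alpha M beta mu Ncap · p) (Iio (mu * Ncap)) := by
  intro x _ y hy hxy
  have hpos := sub_div_pos_of_lt_mul hmu hy
  have hcongestion : (Ncap - x / mu) ^ (-(1 : ℝ) / 2) ≤ (Ncap - y / mu) ^ (-(1 : ℝ) / 2) :=
    Real.rpow_le_rpow_of_nonpos hpos (by gcongr) (by norm_num)
  dsimp only [demand]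
  gcongr

theorem strictAnti_demand (hlam0 : 0 < lam0) (hep : 0 < e_p) (hbeta : 0 < beta) (x : ℝ) :
    StrictAnti (demand lam0 e_p alpha M beta mu Ncap x) := by
  intro p q hpq
  unfold demand
  gcongr

theorem strictMonoOn_focRHS (hK : 0 ≤ lam0 * e_p * alpha * M) (hmu : 0 < mu) :
    StrictMonoOn (focRHS lam0 e_p alpha M mu Ncap) (Ico 0 (mu * Ncap)) := by
  intro x hx y hy hxy
  have hpos := sub_div_pos_of_lt_mul hmu hy.2
  have hcongestion : lam0 * e_p * alpha * M * x / (2 * (Ncap - x / mu) ^ ((3 : ℝ) / 2))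
      ≤ lam0 * e_p * alpha * M * y / (2 * (Ncap - y / mu) ^ ((3 : ℝ) / 2)) := by
    have hnum := mul_nonneg hK (hx.1.trans hxy.le)
    gcongr
  have hlinear := mul_lt_mul_of_pos_right hxy hmu
  unfold focRHS
  linarith

end Model

theorem stmt19_general (lam0 e_p alpha M beta mu Ncap : ℝ)
    (hlam0 : 0 < lam0) (hep : 0 < e_p) (halpha : 0 < alpha) (hM : 0 < M)
    (hbeta : 0 < beta) (hmu : 0 < mu)
    (lam pf lam' pf' : ℝ)
    (hlam : lam ∈ Set.Ioo 0 (mu * Ncap)) (hlam' : lam' ∈ Set.Ioo 0 (mu * Ncap))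
    (hd : lam = lam0 * (1 - e_p * (alpha * M * (Ncap - lam / mu) ^ (-(1 : ℝ) / 2) + beta * pf)))
    (hd' : lam' = lam0 * (1 - e_p * (alpha * M * (Ncap - lam' / mu) ^ (-(1 : ℝ) / 2) + beta * pf')))
    (hf : lam0 * e_p * beta * mu * pf
      = lam0 * e_p * alpha * M * lam / (2 * (Ncap - lam / mu) ^ ((3 : ℝ) / 2)) + lam * mu)
    (hf' : lam0 * e_p * beta * mu * pf'
      = lam0 * e_p * alpha * M * lam' / (2 * (Ncap - lam' / mu) ^ ((3 : ℝ) / 2)) + lam' * mu) :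
    (pf < pf' → lam' < lam) ∧ (pf < pf' → lam < lam') ∧ pf = pf' ∧ lam = lam' := by
  have hDx p : AntitoneOn (demand lam0 e_p alpha M beta mu Ncap · p) (Ioo 0 (mu * Ncap)) :=
    (antitoneOn_demand hlam0.le hep.le (mul_pos halpha hM).le hmu p).mono Ioo_subset_Iio_self
  have hDp x : StrictAnti (demand lam0 e_p alpha M beta mu Ncap x) :=
    strictAnti_demand hlam0 hep hbeta x
  have hF : StrictMonoOn (focRHS lam0 e_p alpha M mu Ncap) (Ioo 0 (mu * Ncap)) :=
    (strictMonoOn_focRHS (by positivity) hmu).mono Ioo_subset_Ico_self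
  have hG : StrictMono (lam0 * e_p * beta * mu * ·) := strictMono_mul_left_of_pos (by positivity)
  have hdemand {x y p q} (hx : x ∈ Ioo 0 (mu * Ncap)) (hy : y ∈ Ioo 0 (mu * Ncap))
      (hxp : x = demand lam0 e_p alpha M beta mu Ncap x p)
      (hyq : y = demand lam0 e_p alpha M beta mu Ncap y q) (hpq : p < q) : y < x :=
    lt_of_isFixedPt_of_lt hDx hDp hx hy hxp.symm hyq.symm hpq
  have hfoc {x y p q} (hx : x ∈ Ioo 0 (mu * Ncap)) (hy : y ∈ Ioo 0 (mu * Ncap))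
      (hxp : lam0 * e_p * beta * mu * p = focRHS lam0 e_p alpha M mu Ncap x)
      (hyq : lam0 * e_p * beta * mu * q = focRHS lam0 e_p alpha M mu Ncap y) (hpq : p < q) :
      x < y :=
    lt_of_eq_of_strictMono hF hG hx hy hxp hyq hpq
  have hpf : pf = pf' := by
    refine le_antisymm (not_lt.1 fun h => ?_) (not_lt.1 fun h => ?_)
    · exact (hdemand hlam' hlam hd' hd h).not_gt (hfoc hlam' hlam hf' hf h)
    · exact (hdemand hlam hlam' hd hd' h).not_gt (hfoc hlam hlam' hf hf' h)
  subst hpf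
  exact ⟨hdemand hlam hlam' hd hd', hfoc hlam hlam' hf hf', rfl,
    hF.injOn hlam hlam' (hf.symm.trans hf')⟩

theorem stmt19 (lam0 e_p alpha M beta mu Ncap : ℝ)
    (hlam0 : 0 < lam0) (hep : 0 < e_p) (halpha : 0 < alpha) (hM : 0 < M)
    (hbeta : 0 < beta) (hmu : 0 < mu) (hNcap : 0 < Ncap)
    (lam pf lam' pf' : ℝ)
    (hlam : lam ∈ Set.Ioo 0 (mu * Ncap)) (hlam' : lam' ∈ Set.Ioo 0 (mu * Ncap))
    (hd : lam = lam0 * (1 - e_p * (alpha * M * (Ncap - lam / mu) ^ (-(1 : ℝ) / 2) + beta * pf)))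
    (hd' : lam' = lam0 * (1 - e_p * (alpha * M * (Ncap - lam' / mu) ^ (-(1 : ℝ) / 2) + beta * pf')))
    (hf : lam0 * e_p * beta * mu * pf
      = lam0 * e_p * alpha * M * lam / (2 * (Ncap - lam / mu) ^ ((3 : ℝ) / 2)) + lam * mu)
    (hf' : lam0 * e_p * beta * mu * pf'
      = lam0 * e_p * alpha * M * lam' / (2 * (Ncap - lam' / mu) ^ ((3 : ℝ) / 2)) + lam' * mu) :
    (pf < pf' → lam' < lam) ∧ (pf < pf' → lam < lam') ∧ pf = pf' ∧ lam = lam' :=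
  stmt19_general lam0 e_p alpha M beta mu Ncap hlam0 hep halpha hM hbeta hmu lam pf lam' pf' hlam
    hlam' hd hd' hf hf'
end
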